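/- Let 1 ≤ p < ∞ and consider the unrooted line tree: I = ℤ with total parent map P(i) = i − 1, so that M_n(i) = {i+n} for all n, i. Let ρ = (ρ_i)_{i∈ℤ} be a weight and define ρ̃ : ℝ → ℝ by ρ̃(u) := ρ_{⌊u⌋}(u − ⌊u⌋). Then the map Φ defined by Φ(f)(u) := f_{⌊u⌋}(u − ⌊u⌋) is a surjective linear isometry from L^p_ρ(L(G)) onto the weighted space L^p(ℝ, ρ̃(u)du), and Φ intertwines the tree translation with the classical left translation on the real line: for every f ∈ L^p_ρ(L(G)) and every t ≥ 0, Φ(T_t f)(u) = Φ(f)(u + t) for almost every u ∈ ℝ. -/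

import Mathlib

open MeasureTheory ENNReal

noncomputable section

/-- `nfl t s = ⌊s + t⌋ ∈ ℕ`. -/
def nfl (t s : ℝ) : ℕ := ⌊s + t⌋₊

/-- The left translation on the unrooted line tree (`I = ℤ`, total parent map `P i = i - 1`,
so `M_n(i) = {i + n}`): `(T_t f)_i(s) = f_{i+n(t,s)}(t + s - n(t,s))`. -/
def TleftLine (f : ℤ → ℝ → ℝ) (t : ℝ) (i : ℤ) (s : ℝ) : ℝ :=
  f (i + (nfl t s : ℤ)) (t + s - (nfl t s : ℝ))

/-- The `p`-th power of the norm of a family `f` in `L^p_ρ(L(G))`: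
`‖f‖_{p,ρ}^p = ∑_{i ∈ ℤ} ∫_0^1 |f_i(s)|^p ρ_i(s) ds`, with values in `[0,∞]`. -/
def pnorm (ρ : ℤ → ℝ → ℝ) (p : ℝ) (f : ℤ → ℝ → ℝ) : ℝ≥0∞ :=
  ∑' i, ∫⁻ s in Set.Icc (0 : ℝ) 1, ENNReal.ofReal (|f i s| ^ p * ρ i s)

/-- Membership in `L^p_ρ(L(G))`. -/
def memLprho (ρ : ℤ → ℝ → ℝ) (p : ℝ) (f : ℤ → ℝ → ℝ) : Prop :=
  (∀ i, AEMeasurable (f i) (volume.restrict (Set.Icc (0 : ℝ) 1))) ∧ pnorm ρ p f < ⊤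

/-- The identification `Φ(f)(u) = f_{⌊u⌋}(u - ⌊u⌋)` of families on the line tree with
functions on `ℝ`. -/
def Phi (f : ℤ → ℝ → ℝ) (u : ℝ) : ℝ := f ⌊u⌋ (u - (⌊u⌋ : ℝ))

/-- The glued weight `ρ̃(u) = ρ_{⌊u⌋}(u - ⌊u⌋)` on `ℝ`. -/
def rhoTilde (ρ : ℤ → ℝ → ℝ) (u : ℝ) : ℝ := ρ ⌊u⌋ (u - (⌊u⌋ : ℝ))

/-- The weighted measure `ρ̃(u) du` on `ℝ`. -/
def lineMeasure (ρ : ℤ → ℝ → ℝ) : Measure ℝ :=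
  volume.withDensity fun u => ENNReal.ofReal (rhoTilde ρ u)

/-! The map `u ↦ (⌊u⌋, u - ⌊u⌋)` cuts `ℝ` into the unit intervals `[i, i + 1)` and identifies
Lebesgue measure on `ℝ` with counting measure on `ℤ` times Lebesgue measure on `[0, 1)`.
Under this identification the weight `ρ̃(u) du` becomes `ρ_i(s) ds` on the `i`-th interval, so
`Φ` preserves the `p`-norm, and `g ↦ (s ↦ g (s + i))_i` is an inverse of `Φ`.  The intertwining
is the identity `⌊(u - ⌊u⌋) + t⌋ = ⌊u + t⌋ - ⌊u⌋`: the tree translation moves `n(t, s)` edges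
up the line exactly when the real translation crosses `n(t, s)` integers. -/

open Set

def PhiInv (g : ℝ → ℝ) (i : ℤ) (s : ℝ) : ℝ := g (s + i)

lemma Phi_PhiInv (g : ℝ → ℝ) : Phi (PhiInv g) = g :=
  funext fun u => congrArg g (sub_add_cancel u _)

lemma Phi_add_intCast (f : ℤ → ℝ → ℝ) (i : ℤ) {s : ℝ} (hs : s ∈ Ico (0 : ℝ) 1) :
    Phi f (s + i) = f i s := by
  have hfloor : ⌊s + i⌋ = i := by rw [Int.floor_add_intCast, Int.floor_eq_zero_iff.2 hs, zero_add]
  simp only [Phi, hfloor, add_sub_cancel_right]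

lemma rhoTilde_eq_Phi : rhoTilde = Phi := rfl

lemma measurable_Phi {f : ℤ → ℝ → ℝ} (hf : ∀ i, Measurable (f i)) : Measurable (Phi f) :=
  have hjoint : Measurable fun q : ℝ × ℤ => f q.2 q.1 := measurable_from_prod_countable_left hf
  hjoint.comp (measurable_fract.prodMk Int.measurable_floor)

lemma Phi_ae_congr {f g : ℤ → ℝ → ℝ} (h : ∀ i, f i =ᵐ[volume.restrict (Icc 0 1)] g i) :
    Phi f =ᵐ[volume] Phi g := by
  have hnull : ∀ i : ℤ, volume ({s | f i s ≠ g i s} ∩ Icc (0 : ℝ) 1) = 0 := fun i => by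
    simpa only [Filter.EventuallyEq, ae_iff, Measure.restrict_apply' measurableSet_Icc] using h i
  have hcover : {u | Phi f u ≠ Phi g u} ⊆
      ⋃ i : ℤ, (· + -(i : ℝ)) ⁻¹' ({s | f i s ≠ g i s} ∩ Icc 0 1) := fun u hu => by
    refine mem_iUnion.2 ⟨⌊u⌋, ?_⟩
    rw [mem_preimage, ← sub_eq_add_neg, Int.self_sub_floor]
    exact ⟨hu, Int.fract_nonneg u, (Int.fract_lt_one u).le⟩
  exact measure_mono_null hcover <| measure_iUnion_null fun i =>
    (measure_preimage_add_right _ _ _).trans (hnull i)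

lemma aemeasurable_Phi {f : ℤ → ℝ → ℝ} (hf : ∀ i, AEMeasurable (f i) (volume.restrict (Icc 0 1))) :
    AEMeasurable (Phi f) :=
  ⟨Phi fun i => (hf i).mk, measurable_Phi fun i => (hf i).measurable_mk,
    Phi_ae_congr fun i => (hf i).ae_eq_mk⟩

lemma lintegral_eq_tsum_Ico (F : ℝ → ℝ≥0∞) :
    ∫⁻ u, F u = ∑' i : ℤ, ∫⁻ s in Ico 0 1, F (s + i) := by
  calc ∫⁻ u, F u = ∫⁻ u in ⋃ i : ℤ, Ico (i : ℝ) (i + 1), F u := by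
        rw [iUnion_Ico_intCast, Measure.restrict_univ]
    _ = ∑' i : ℤ, ∫⁻ u in Ico (i : ℝ) (i + 1), F u :=
        lintegral_iUnion (fun _ => measurableSet_Ico) (pairwise_disjoint_Ico_intCast ℝ) F
    _ = ∑' i : ℤ, ∫⁻ s in Ico 0 1, F (s + i) := tsum_congr fun i => by
        rw [← (measurePreserving_add_right volume (i : ℝ)).setLIntegral_comp_preimage_emb
          (measurableEmbedding_addRight _), preimage_add_const_Ico, sub_self, add_sub_cancel_left]

lemma lintegral_rpow_Phi_eq_pnorm (p : ℝ) {ρ f : ℤ → ℝ → ℝ}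
    (hρ : ∀ i, AEMeasurable (ρ i) (volume.restrict (Icc 0 1)))
    (hf : ∀ i, AEMeasurable (f i) (volume.restrict (Icc 0 1))) :
    ∫⁻ u, ENNReal.ofReal (|Phi f u| ^ p) ∂(lineMeasure ρ) = pnorm ρ p f := by
  rw [lineMeasure, rhoTilde_eq_Phi, lintegral_withDensity_eq_lintegral_mul₀
    (aemeasurable_Phi hρ).ennreal_ofReal ((aemeasurable_Phi hf).abs.pow_const p).ennreal_ofReal,
    lintegral_eq_tsum_Ico, pnorm]
  refine tsum_congr fun i => ?_
  rw [← Measure.restrict_congr_set Ico_ae_eq_Icc]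
  refine setLIntegral_congr_fun measurableSet_Ico fun s hs => ?_
  rw [Pi.mul_apply, Phi_add_intCast ρ i hs, Phi_add_intCast f i hs,
    ENNReal.ofReal_mul (by positivity), mul_comm]

lemma memLp_ofReal_iff {α : Type*} [MeasurableSpace α] {μ : Measure α} {p : ℝ} (hp : 0 < p)
    {g : α → ℝ} :
    MemLp g (ENNReal.ofReal p) μ ↔
      AEStronglyMeasurable g μ ∧ ∫⁻ a, ENNReal.ofReal (|g a| ^ p) ∂μ < ⊤ := by
  rw [MemLp, eLpNorm_lt_top_iff_lintegral_rpow_enorm_lt_top (ENNReal.ofReal_pos.2 hp).ne'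
    ENNReal.ofReal_ne_top, ENNReal.toReal_ofReal hp.le]
  simp only [Real.enorm_eq_ofReal_abs, ENNReal.ofReal_rpow_of_nonneg (abs_nonneg _) hp.le]

lemma memLprho_PhiInv {p : ℝ} (hp : 0 < p) {ρ : ℤ → ℝ → ℝ}
    (hρ : ∀ i, AEMeasurable (ρ i) (volume.restrict (Icc 0 1))) {g : ℝ → ℝ} (hgm : Measurable g)
    (hg : MemLp g (ENNReal.ofReal p) (lineMeasure ρ)) :
    memLprho ρ p (PhiInv g) := by
  have hmeas : ∀ i, AEMeasurable (PhiInv g i) (volume.restrict (Icc 0 1)) := fun i =>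
    (hgm.comp (measurable_add_const _)).aemeasurable
  refine ⟨hmeas, ?_⟩
  rw [← lintegral_rpow_Phi_eq_pnorm p hρ hmeas, Phi_PhiInv]
  exact ((memLp_ofReal_iff hp).1 hg).2

lemma natCast_nfl_fract {t : ℝ} (ht : 0 ≤ t) (u : ℝ) :
    (nfl t (Int.fract u) : ℤ) = ⌊u + t⌋ - ⌊u⌋ := by
  rw [nfl, Int.natCast_floor_eq_floor (by linarith [Int.fract_nonneg u]), Int.fract,
    sub_add_eq_add_sub, Int.floor_sub_intCast]

lemma Phi_TleftLine (f : ℤ → ℝ → ℝ) {t : ℝ} (ht : 0 ≤ t) (u : ℝ) :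
    Phi (TleftLine f t) u = Phi f (u + t) := by
  have hn := natCast_nfl_fract ht u
  have hnℝ : (nfl t (Int.fract u) : ℝ) = ⌊u + t⌋ - ⌊u⌋ := by
    rw [← Int.cast_natCast, hn, Int.cast_sub]
  unfold Phi TleftLine
  rw [Int.self_sub_floor, hn, hnℝ, Int.fract]
  congr 1 <;> ring

theorem line_tree_isometry_real_general (p : ℝ) (hp : 1 ≤ p) (ρ : ℤ → ℝ → ℝ)
    (hint : ∀ i, IntegrableOn (ρ i) (Set.Icc (0 : ℝ) 1)) :
    (∀ (f g : ℤ → ℝ → ℝ) (a b : ℝ),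
      Phi (fun i s => a * f i s + b * g i s) = fun u => a * Phi f u + b * Phi g u) ∧
    (∀ f, memLprho ρ p f →
      MemLp (Phi f) (ENNReal.ofReal p) (lineMeasure ρ) ∧
      ∫⁻ u, ENNReal.ofReal (|Phi f u| ^ p) ∂(lineMeasure ρ) = pnorm ρ p f) ∧
    (∀ g : ℝ → ℝ, MemLp g (ENNReal.ofReal p) (lineMeasure ρ) →
      ∃ f, memLprho ρ p f ∧ Phi f =ᵐ[lineMeasure ρ] g) ∧
    (∀ f, memLprho ρ p f → ∀ t ≥ (0 : ℝ),
      ∀ᵐ u : ℝ, Phi (TleftLine f t) u = Phi f (u + t)) := by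
  have hp0 : 0 < p := by linarith
  have hρ : ∀ i, AEMeasurable (ρ i) (volume.restrict (Icc 0 1)) := fun i => (hint i).aemeasurable
  refine ⟨fun f g a b => rfl, fun f hf => ?_, fun g hg => ?_,
    fun f _ t ht => .of_forall (Phi_TleftLine f ht)⟩
  · have hnorm := lintegral_rpow_Phi_eq_pnorm p hρ hf.1
    have hmeas : AEStronglyMeasurable (Phi f) (lineMeasure ρ) :=
      (aemeasurable_Phi hf.1).aestronglyMeasurable.mono_ac (withDensity_absolutelyContinuous _ _)
    exact ⟨(memLp_ofReal_iff hp0).2 ⟨hmeas, hnorm ▸ hf.2⟩, hnorm⟩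
  · have hgm := hg.aestronglyMeasurable
    refine ⟨PhiInv (hgm.mk g), memLprho_PhiInv hp0 hρ hgm.stronglyMeasurable_mk.measurable
      (hg.ae_eq hgm.ae_eq_mk), ?_⟩
    rw [Phi_PhiInv]
    exact hgm.ae_eq_mk.symm

/-- **Remark 1.6 (unrooted line)**.  Let `1 ≤ p < ∞` and consider the unrooted line tree
`I = ℤ` with `M_n(i) = {i+n}`.  Let `ρ = (ρ_i)_{i ∈ ℤ}` be a weight and
`ρ̃(u) = ρ_{⌊u⌋}(u - ⌊u⌋)`.  Then `Φ(f)(u) = f_{⌊u⌋}(u - ⌊u⌋)` is a surjective linear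
isometry from `L^p_ρ(L(G))` onto `L^p(ℝ, ρ̃(u)du)`, and `Φ` intertwines the tree translation
with the classical left translation on the line: `Φ(T_t f)(u) = Φ(f)(u + t)` for a.e.
`u ∈ ℝ`. -/
theorem line_tree_isometry_real (p : ℝ) (hp : 1 ≤ p) (ρ : ℤ → ℝ → ℝ)
    (hint : ∀ i, IntegrableOn (ρ i) (Set.Icc (0 : ℝ) 1))
    (hpos : ∀ i, ∀ᵐ s ∂(volume.restrict (Set.Icc (0 : ℝ) 1)), 0 < ρ i s) :
    (∀ (f g : ℤ → ℝ → ℝ) (a b : ℝ),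
      Phi (fun i s => a * f i s + b * g i s) = fun u => a * Phi f u + b * Phi g u) ∧
    (∀ f, memLprho ρ p f →
      MemLp (Phi f) (ENNReal.ofReal p) (lineMeasure ρ) ∧
      ∫⁻ u, ENNReal.ofReal (|Phi f u| ^ p) ∂(lineMeasure ρ) = pnorm ρ p f) ∧
    (∀ g : ℝ → ℝ, MemLp g (ENNReal.ofReal p) (lineMeasure ρ) →
      ∃ f, memLprho ρ p f ∧ Phi f =ᵐ[lineMeasure ρ] g) ∧
    (∀ f, memLprho ρ p f → ∀ t ≥ (0 : ℝ),
      ∀ᵐ u : ℝ, Phi (TleftLine f t) u = Phi f (u + t)) :=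
  line_tree_isometry_real_general p hp ρ hint

end
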